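/- arXiv:2508.02991 — 4 statements merged into one kernel-verified Lean document; each statement's English description precedes it below -/
import Mathlib

section
/- Let Q be a quantale, M a shrinkable Q-module, and F_1, …, F_n multiplicative filters of Q; set F = F_1 ∩ ⋯ ∩ F_n. If a, b ∈ M satisfy a ≼_{F_k} b and b ≼_{F_k} a for every k = 1, …, n, then a ≼_F b and b ≼_F a. (Equivalently, the canonical map from the localization M_F to the product of the localizations M_{F_k} is injective.) -/
universe u v

/-- A (commutative, integral) quantale: a complete lattice with a commutative monoid
structure whose unit is the top element and whose multiplication distributes over
arbitrary suprema. -/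
class IntegralQuantale (Q : Type u) extends CompleteLattice Q, CommMonoid Q where
  one_eq_top : (1 : Q) = ⊤
  mul_sSup : ∀ (a : Q) (S : Set Q), a * sSup S = ⨆ b ∈ S, a * b

/-- A module over a quantale. -/
class QModule (Q : Type u) [IntegralQuantale Q] (M : Type v) extends
    CompleteLattice M, SMul Q M where
  mul_smul' : ∀ (p q : Q) (m : M), (p * q) • m = p • (q • m)
  top_smul' : ∀ m : M, (⊤ : Q) • m = m
  smul_sSup' : ∀ (q : Q) (S : Set M), S.Nonempty → q • sSup S = ⨆ m ∈ S, q • m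
  sSup_smul' : ∀ (S : Set Q) (m : M), S.Nonempty → (⨆ q ∈ S, (q : Q)) • m = ⨆ q ∈ S, q • m

/-- A multiplicative filter of a quantale. -/
def IsMFilter {Q : Type u} [IntegralQuantale Q] (F : Set Q) : Prop :=
  ⊤ ∈ F ∧ (∀ a ∈ F, ∀ b : Q, a ≤ b → b ∈ F) ∧ ∀ a ∈ F, ∀ b ∈ F, a * b ∈ F

/-- `a ≼¹_F b`: `a` is locally less than `b` in one step; witnessed by a nonempty
family of pairs `(aᵢ, sᵢ)` with `sᵢ ∈ F`, `a ≤ ⨆ aᵢ` and `sᵢ • aᵢ ≤ b`. -/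
def stepLE {Q : Type u} {M : Type v} [IntegralQuantale Q] [QModule Q M]
    (F : Set Q) (a b : M) : Prop :=
  ∃ P : Set (M × Q), P.Nonempty ∧ (∀ p ∈ P, p.2 ∈ F) ∧
    (a ≤ ⨆ p ∈ P, Prod.fst p) ∧ ∀ p ∈ P, p.2 • p.1 ≤ b

/-- `a ≼ⁿ_F b`: locally less than in `n` steps. -/
def nStepLE {Q : Type u} {M : Type v} [IntegralQuantale Q] [QModule Q M]
    (F : Set Q) : ℕ → M → M → Prop
  | 0, a, b => a = b
  | n + 1, a, b => ∃ c : M, stepLE F a c ∧ nStepLE F n c b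

/-- `a ≼_F b`: locally less than (in some positive number of steps). -/
def localLE {Q : Type u} {M : Type v} [IntegralQuantale Q] [QModule Q M]
    (F : Set Q) (a b : M) : Prop :=
  ∃ n : ℕ, 1 ≤ n ∧ nStepLE F n a b

/-- A complete lattice is shrinkable if every inequality `x ≤ ⨆ xᵢ` can be shrunk
to an equality `x = ⨆ yⱼ` with each `yⱼ` below a finite subsupremum of the `xᵢ`. -/
def Shrinkable (L : Type u) [CompleteLattice L] : Prop :=
  ∀ (x : L) (S : Set L), S.Nonempty → x ≤ sSup S →
    ∃ Y : Set L, Y.Nonempty ∧ x = sSup Y ∧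
      ∀ y ∈ Y, ∃ T : Finset L, T.Nonempty ∧ ↑T ⊆ S ∧ y ≤ T.sup id

/-! The one-step relation `a ≼¹_F b` says `a ≤ J_F b`, where `J_F b = ⨆ {y | ∃ s ∈ F, s • y ≤ b}`,
so `a ≼_F b` says `a ≤ J_Fⁿ b` for some `n`. For two m-filters `F`, `G`, shrinkability gives the
one-step estimate `J_F x ⊓ J_G y ≤ J_{F ∩ G} ((x ⊓ J_G y) ⊔ (J_F x ⊓ y))`: refine `J_F x ⊓ J_G y`
into pieces `w` with `s • w ≤ x` and `t • w ≤ y`, and use `s ⊔ t ∈ F ∩ G`. Iterating it, by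
induction on `n + m`, bounds `J_Fⁿ a ⊓ J_Gᵐ a` by some `J_{F ∩ G}ᵏ a`; the finite case follows by
induction on the number of filters. -/

namespace IsMFilter

variable {Q : Type u} [IntegralQuantale Q] {F G : Set Q}

theorem top_mem (hF : IsMFilter F) : ⊤ ∈ F := hF.1

theorem mem_of_le (hF : IsMFilter F) {a b : Q} (ha : a ∈ F) (hab : a ≤ b) : b ∈ F :=
  hF.2.1 a ha b hab

theorem mul_mem (hF : IsMFilter F) {a b : Q} (ha : a ∈ F) (hb : b ∈ F) : a * b ∈ F :=
  hF.2.2 a ha b hb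

theorem inter (hF : IsMFilter F) (hG : IsMFilter G) : IsMFilter (F ∩ G) :=
  ⟨⟨hF.top_mem, hG.top_mem⟩, fun _ ha _ hab => ⟨hF.mem_of_le ha.1 hab, hG.mem_of_le ha.2 hab⟩,
    fun _ ha _ hb => ⟨hF.mul_mem ha.1 hb.1, hG.mul_mem ha.2 hb.2⟩⟩

theorem iInter {ι : Sort*} {F : ι → Set Q} (hF : ∀ i, IsMFilter (F i)) :
    IsMFilter (⋂ i, F i) := by
  simp only [IsMFilter, Set.mem_iInter] at hF ⊢
  exact ⟨fun i => (hF i).1, fun a ha b hab i => (hF i).2.1 a (ha i) b hab,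
    fun a ha b hb i => (hF i).2.2 a (ha i) b (hb i)⟩

end IsMFilter

namespace QModule

variable {Q : Type u} {M : Type v} [IntegralQuantale Q] [QModule Q M]

theorem smul_sup (q : Q) (x y : M) : q • (x ⊔ y) = q • x ⊔ q • y := by
  simpa [iSup_or, iSup_sup_eq] using smul_sSup' q {x, y} (Set.insert_nonempty x {y})

theorem sup_smul (p q : Q) (x : M) : (p ⊔ q) • x = p • x ⊔ q • x := by
  simpa [iSup_or, iSup_sup_eq] using sSup_smul' {p, q} x (Set.insert_nonempty p {q})

theorem smul_mono_right (q : Q) {x y : M} (h : x ≤ y) : q • x ≤ q • y :=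
  calc q • x ≤ q • x ⊔ q • y := le_sup_left
    _ = q • y := by rw [← smul_sup, sup_eq_right.mpr h]

theorem smul_le_self (q : Q) (x : M) : q • x ≤ x :=
  calc q • x ≤ q • x ⊔ (⊤ : Q) • x := le_sup_left
    _ = x := by rw [← sup_smul, sup_top_eq, top_smul']

end QModule

open QModule

section LocalOrder

variable {Q : Type u} {M : Type v} [IntegralQuantale Q] [QModule Q M] {F G : Set Q}

def stepSup (F : Set Q) (x : M) : M := sSup {y | ∃ s ∈ F, s • y ≤ x}

theorem le_stepSup_of_smul_le {s : Q} (hs : s ∈ F) {x y : M} (h : s • y ≤ x) :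
    y ≤ stepSup F x :=
  le_sSup ⟨s, hs, h⟩

theorem stepSup_mono (F : Set Q) : Monotone (stepSup (M := M) F) :=
  fun _ _ h => sSup_le_sSup fun _ ⟨s, hs, hy⟩ => ⟨s, hs, hy.trans h⟩

theorem le_stepSup (hF : ⊤ ∈ F) (x : M) : x ≤ stepSup F x :=
  le_stepSup_of_smul_le hF (top_smul' x).le

theorem monotone_iterate_stepSup (hF : ⊤ ∈ F) (x : M) :
    Monotone fun n => (stepSup F)^[n] x :=
  monotone_nat_of_le_succ fun n => by
    rw [Function.iterate_succ_apply']
    exact le_stepSup hF _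

theorem stepLE.le_stepSup {a b : M} (h : stepLE F a b) : a ≤ stepSup F b := by
  obtain ⟨P, -, hPF, haP, hPb⟩ := h
  exact haP.trans (iSup₂_le fun p hp => le_stepSup_of_smul_le (hPF p hp) (hPb p hp))

theorem stepLE_of_le_stepSup (hF : ⊤ ∈ F) {a b : M} (h : a ≤ stepSup F b) : stepLE F a b := by
  refine ⟨{p | p.2 ∈ F ∧ p.2 • p.1 ≤ b}, ⟨(b, ⊤), hF, (top_smul' b).le⟩,
    fun p hp => hp.1, h.trans (sSup_le ?_), fun p hp => hp.2⟩
  rintro y ⟨s, hs, hy⟩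
  exact le_iSup₂_of_le (y, s) ⟨hs, hy⟩ le_rfl

theorem nStepLE.le_iterate_stepSup {n : ℕ} {a b : M} (h : nStepLE F n a b) :
    a ≤ (stepSup F)^[n] b := by
  induction n generalizing a with
  | zero => exact h.le
  | succ n ih =>
    obtain ⟨c, hac, hcb⟩ := h
    rw [Function.iterate_succ_apply']
    exact hac.le_stepSup.trans (stepSup_mono F (ih hcb))

theorem nStepLE_succ_of_le_iterate_stepSup (hF : ⊤ ∈ F) {n : ℕ} {a b : M}
    (h : a ≤ (stepSup F)^[n + 1] b) : nStepLE F (n + 1) a b := by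
  induction n generalizing a with
  | zero => exact ⟨b, stepLE_of_le_stepSup hF h, rfl⟩
  | succ n ih =>
    rw [Function.iterate_succ_apply'] at h
    exact ⟨_, stepLE_of_le_stepSup hF h, ih le_rfl⟩

theorem localLE_iff_exists_le_iterate (hF : ⊤ ∈ F) {a b : M} :
    localLE F a b ↔ ∃ n, a ≤ (stepSup F)^[n] b := by
  refine ⟨fun ⟨n, _, h⟩ => ⟨n, h.le_iterate_stepSup⟩, fun ⟨n, h⟩ => ?_⟩
  exact ⟨n + 1, Nat.le_add_left 1 n, nStepLE_succ_of_le_iterate_stepSup hF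
    (h.trans (monotone_iterate_stepSup hF b n.le_succ))⟩

theorem IsMFilter.exists_smul_finset_sup_le (hF : IsMFilter F) {x : M} (T : Finset M)
    (hT : ∀ y ∈ T, ∃ s ∈ F, s • y ≤ x) : ∃ s ∈ F, s • T.sup id ≤ x := by
  classical
  induction T using Finset.induction_on with
  | empty => exact ⟨⊤, hF.top_mem, by rw [Finset.sup_empty, top_smul']; exact bot_le⟩
  | insert y T _ ih =>
    obtain ⟨s, hs, hsy⟩ := hT y (Finset.mem_insert_self y T)
    obtain ⟨t, ht, htT⟩ := ih fun z hz => hT z (Finset.mem_insert_of_mem hz)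
    refine ⟨t * s, hF.mul_mem ht hs, ?_⟩
    rw [Finset.sup_insert, smul_sup, id, mul_smul']
    refine sup_le ((smul_le_self t _).trans hsy) ?_
    rw [mul_comm, mul_smul']
    exact (smul_le_self s _).trans htT

theorem Shrinkable.exists_eq_sSup_of_le_stepSup (hM : Shrinkable M) (hF : IsMFilter F)
    {x z : M} (h : z ≤ stepSup F x) :
    ∃ Y : Set M, z = sSup Y ∧ ∀ y ∈ Y, ∃ s ∈ F, s • y ≤ x := by
  obtain ⟨Y, -, hzY, hY⟩ := hM z {y | ∃ s ∈ F, s • y ≤ x} ⟨x, ⊤, hF.top_mem, (top_smul' x).le⟩ h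
  refine ⟨Y, hzY, fun y hy => ?_⟩
  obtain ⟨T, -, hTS, hyT⟩ := hY y hy
  obtain ⟨s, hs, hsT⟩ := hF.exists_smul_finset_sup_le T fun w hw => hTS hw
  exact ⟨s, hs, (smul_mono_right s hyT).trans hsT⟩

theorem Shrinkable.stepSup_inf_stepSup_le (hM : Shrinkable M) (hF : IsMFilter F)
    (hG : IsMFilter G) (x y : M) :
    stepSup F x ⊓ stepSup G y ≤ stepSup (F ∩ G) ((x ⊓ stepSup G y) ⊔ (stepSup F x ⊓ y)) := by
  set z := stepSup F x ⊓ stepSup G y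
  obtain ⟨V, hzV, hV⟩ := hM.exists_eq_sSup_of_le_stepSup (z := z) hF inf_le_left
  rw [hzV]
  refine sSup_le fun v hv => ?_
  obtain ⟨s, hs, hsv⟩ := hV v hv
  have hvz : v ≤ z := hzV ▸ le_sSup hv
  obtain ⟨W, hvW, hW⟩ := hM.exists_eq_sSup_of_le_stepSup hG (hvz.trans inf_le_right)
  rw [hvW]
  refine sSup_le fun w hw => ?_
  obtain ⟨t, ht, htw⟩ := hW w hw
  have hwv : w ≤ v := hvW ▸ le_sSup hw
  have hwz : w ≤ z := hwv.trans hvz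
  refine le_stepSup_of_smul_le (F := F ∩ G) (s := s ⊔ t)
    ⟨hF.mem_of_le hs le_sup_left, hG.mem_of_le ht le_sup_right⟩ ?_
  rw [sup_smul]
  exact sup_le_sup
    (le_inf ((smul_mono_right s hwv).trans hsv) ((smul_le_self s w).trans (hwz.trans inf_le_right)))
    (le_inf ((smul_le_self t w).trans (hwz.trans inf_le_left)) htw)

theorem Shrinkable.exists_iterate_stepSup_inf_le (hM : Shrinkable M) (hF : IsMFilter F)
    (hG : IsMFilter G) (a : M) (n m : ℕ) :
    ∃ k, (stepSup F)^[n] a ⊓ (stepSup G)^[m] a ≤ (stepSup (F ∩ G))^[k] a := by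
  induction n generalizing m with
  | zero => exact ⟨0, inf_le_left⟩
  | succ n ihn =>
    induction m with
    | zero => exact ⟨0, inf_le_right⟩
    | succ m ihm =>
      obtain ⟨k₁, hk₁⟩ := ihn (m + 1)
      obtain ⟨k₂, hk₂⟩ := ihm
      have hmono := monotone_iterate_stepSup (hF.inter hG).top_mem a
      refine ⟨max k₁ k₂ + 1, ?_⟩
      rw [Function.iterate_succ_apply', Function.iterate_succ_apply',
        Function.iterate_succ_apply']
      refine (hM.stepSup_inf_stepSup_le hF hG _ _).trans (stepSup_mono _ (sup_le ?_ ?_))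
      · rw [← Function.iterate_succ_apply' (stepSup G)]
        exact hk₁.trans (hmono (le_max_left k₁ k₂))
      · rw [← Function.iterate_succ_apply' (stepSup F)]
        exact hk₂.trans (hmono (le_max_right k₁ k₂))

theorem Shrinkable.localLE_inter (hM : Shrinkable M) (hF : IsMFilter F) (hG : IsMFilter G)
    {a b : M} (hFab : localLE F a b) (hGab : localLE G a b) : localLE (F ∩ G) a b := by
  obtain ⟨n, hn⟩ := (localLE_iff_exists_le_iterate hF.top_mem).mp hFab
  obtain ⟨m, hm⟩ := (localLE_iff_exists_le_iterate hG.top_mem).mp hGab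
  obtain ⟨k, hk⟩ := hM.exists_iterate_stepSup_inf_le hF hG b n m
  exact (localLE_iff_exists_le_iterate (hF.inter hG).top_mem).mpr ⟨k, (le_inf hn hm).trans hk⟩

theorem Shrinkable.localLE_biInter {ι : Type*} (hM : Shrinkable M) {F : ι → Set Q}
    {s : Finset ι} (hs : s.Nonempty) (hF : ∀ k ∈ s, IsMFilter (F k)) {a b : M}
    (hab : ∀ k ∈ s, localLE (F k) a b) : localLE (⋂ k ∈ s, F k) a b := by
  classical
  induction hs using Finset.Nonempty.cons_induction with
  | singleton k => simpa using hab k (Finset.mem_singleton_self k)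
  | cons k s hk _ ih =>
    simp only [Finset.cons_eq_insert, Finset.mem_insert, forall_eq_or_imp] at hF hab
    rw [Finset.cons_eq_insert, Finset.set_biInter_insert]
    exact hM.localLE_inter hF.1 (IsMFilter.iInter fun k => IsMFilter.iInter (hF.2 k)) hab.1
      (ih hF.2 hab.2)

theorem Shrinkable.localLE_iInter {ι : Type*} [Finite ι] [Nonempty ι] (hM : Shrinkable M)
    {F : ι → Set Q} (hF : ∀ k, IsMFilter (F k)) {a b : M} (hab : ∀ k, localLE (F k) a b) :
    localLE (⋂ k, F k) a b := by
  have := Fintype.ofFinite ι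
  simpa using hM.localLE_biInter Finset.univ_nonempty (fun k _ => hF k) (fun k _ => hab k)

end LocalOrder

/-- First filter merging theorem (injectivity): if `a` and `b` are identified in each
localization `M_{F_k}`, then they are identified in `M_{F_1 ∩ ⋯ ∩ F_n}`. -/
theorem finite_filter_merge_injective {Q : Type u} {M : Type v}
    [IntegralQuantale Q] [QModule Q M] (hM : Shrinkable M)
    (n : ℕ) (hn : 0 < n) (F : Fin n → Set Q) (hF : ∀ k, IsMFilter (F k))
    (a b : M) (hab : ∀ k, localLE (F k) a b) (hba : ∀ k, localLE (F k) b a) :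
    localLE (⋂ k, F k) a b ∧ localLE (⋂ k, F k) b a := by
  have : Nonempty (Fin n) := ⟨⟨0, hn⟩⟩
  exact ⟨hM.localLE_iInter hF hab, hM.localLE_iInter hF hba⟩
end

section
/- Let Q be a quantale, M a shrinkable Q-module, and F_1, …, F_n multiplicative filters of Q. Suppose x_1, …, x_n ∈ M satisfy x_i ≼¹_{F_i + F_j} x_j for all i ≠ j. Then there exists x ∈ M such that x ≼¹_{F_i} x_i and x_i ≼¹_{F_i} x for every i = 1, …, n. -/
universe u v

/-- The sum `F + G` of two multiplicative filters:
`{q : ∃ s ∈ F, ∃ t ∈ G, s * t ≤ q}`. -/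
def filterSum {Q : Type u} [IntegralQuantale Q] (F G : Set Q) : Set Q :=
  {q : Q | ∃ s ∈ F, ∃ t ∈ G, s * t ≤ q}


/-!
Glue the `xᵢ` to `y := ⨆ G`, where `G` is the set of `v` such that for each `j` some `u ∈ Fⱼ`
gives `u • v ≤ xⱼ`. Then `y ≼¹_{Fᵢ} xᵢ` holds because `G` itself is the covering family.
For `xᵢ ≼¹_{Fᵢ} y` we cover `xᵢ` by elements `w` such that `s • w ∈ G` for one `s ∈ Fᵢ`.
We get this cover by handling one index `j` at a time. Shrinkability refines the current
cover of `xᵢ` so that every piece lies under a piece of a witness of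
`xᵢ ≼¹_{Fᵢ+Fⱼ} xⱼ`. The `Fᵢ` part of the scalar from `Fᵢ + Fⱼ` then goes into `s`.
-/

section Monotonicity

variable {Q : Type u} {M : Type v} [IntegralQuantale Q] [QModule Q M]

theorem IntegralQuantale.mul_le_mul_of_le_right (a : Q) {b c : Q} (h : b ≤ c) :
    a * b ≤ a * c :=
  calc a * b ≤ ⨆ d ∈ ({b, c} : Set Q), a * d := le_iSup₂_of_le b (by simp) le_rfl
    _ = a * c := by rw [← IntegralQuantale.mul_sSup, sSup_pair, sup_of_le_right h]

theorem IntegralQuantale.mul_le_left (a b : Q) : a * b ≤ a :=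
  calc a * b ≤ a * ⊤ := IntegralQuantale.mul_le_mul_of_le_right a le_top
    _ = a := by rw [← IntegralQuantale.one_eq_top, mul_one]

theorem IntegralQuantale.mul_le_right (a b : Q) : a * b ≤ b :=
  mul_comm a b ▸ IntegralQuantale.mul_le_left b a

theorem QModule.smul_sup_eq (q : Q) (a b : M) : q • (a ⊔ b) = q • a ⊔ q • b := by
  rw [← sSup_pair, QModule.smul_sSup' q _ (Set.insert_nonempty _ _), iSup_pair]

theorem QModule.smul_le_smul_of_le_right (q : Q) {a b : M} (h : a ≤ b) : q • a ≤ q • b :=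
  calc q • a ≤ q • a ⊔ q • b := le_sup_left
    _ = q • b := by rw [← QModule.smul_sup_eq, sup_of_le_right h]

theorem QModule.smul_le_smul_of_le_left {p q : Q} (h : p ≤ q) (m : M) : p • m ≤ q • m :=
  calc p • m ≤ ⨆ r ∈ ({p, q} : Set Q), r • m := le_iSup₂_of_le p (by simp) le_rfl
    _ = q • m := by
      rw [← QModule.sSup_smul' _ m (Set.insert_nonempty _ _), iSup_pair, sup_of_le_right h]

end Monotonicity

theorem isMFilter_filterSum {Q : Type u} [IntegralQuantale Q] {F G : Set Q}
    (hF : IsMFilter F) (hG : IsMFilter G) : IsMFilter (filterSum F G) := by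
  refine ⟨⟨⊤, hF.1, ⊤, hG.1, le_top⟩, ?_, ?_⟩
  · rintro a ⟨s, hs, t, ht, hst⟩ b hab
    exact ⟨s, hs, t, ht, hst.trans hab⟩
  · rintro a ⟨s₁, hs₁, t₁, ht₁, h₁⟩ b ⟨s₂, hs₂, t₂, ht₂, h₂⟩
    refine ⟨s₁ * s₂, hF.2.2 _ hs₁ _ hs₂, t₁ * t₂, hG.2.2 _ ht₁ _ ht₂, ?_⟩
    calc s₁ * s₂ * (t₁ * t₂) = s₁ * t₁ * (s₂ * t₂) := mul_mul_mul_comm s₁ s₂ t₁ t₂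
      _ ≤ a * (s₂ * t₂) := by
        rw [mul_comm _ (s₂ * t₂), mul_comm a]
        exact IntegralQuantale.mul_le_mul_of_le_right _ h₁
      _ ≤ a * b := IntegralQuantale.mul_le_mul_of_le_right a h₂

theorem Shrinkable.le_sSup_inter_Iic {L : Type u} [CompleteLattice L] (hL : Shrinkable L)
    {S : Set L} (hS : S.Nonempty) (hSl : IsLowerSet S) (hSs : SupClosed S) {a : L}
    (ha : a ≤ sSup S) : a ≤ sSup (S ∩ Set.Iic a) := by
  obtain ⟨Y, -, rfl, hY⟩ := hL a S hS ha
  refine sSup_le_sSup fun y hy => ⟨?_, le_sSup hy⟩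
  obtain ⟨T, hT, hTS, hyT⟩ := hY y hy
  exact hSl hyT (hSs.finsetSup_mem hT fun t ht => hTS ht)

section SmulBelow

variable {Q : Type u} {M : Type v} [IntegralQuantale Q] [QModule Q M]

def smulBelow (H : Set Q) (b : M) : Set M := {w | ∃ u ∈ H, u • w ≤ b}

theorem self_mem_smulBelow {H : Set Q} (hH : ⊤ ∈ H) (b : M) : b ∈ smulBelow H b :=
  ⟨⊤, hH, (QModule.top_smul' b).le⟩

theorem isLowerSet_smulBelow (H : Set Q) (b : M) : IsLowerSet (smulBelow H b) :=
  fun _ _ hvw ⟨u, hu, huw⟩ => ⟨u, hu, (QModule.smul_le_smul_of_le_right u hvw).trans huw⟩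

theorem supClosed_smulBelow {H : Set Q} (hH : IsMFilter H) (b : M) :
    SupClosed (smulBelow H b) := by
  rintro v ⟨u, hu, huv⟩ w ⟨u', hu', huw⟩
  refine ⟨u * u', hH.2.2 _ hu _ hu', ?_⟩
  rw [QModule.smul_sup_eq]
  exact sup_le
    ((QModule.smul_le_smul_of_le_left (IntegralQuantale.mul_le_left u u') v).trans huv)
    ((QModule.smul_le_smul_of_le_left (IntegralQuantale.mul_le_right u u') w).trans huw)

theorem stepLE_iff_le_sSup_smulBelow {H : Set Q} (hH : ⊤ ∈ H) {a b : M} :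
    stepLE H a b ↔ a ≤ sSup (smulBelow H b) := by
  constructor
  · rintro ⟨P, -, hPH, hcov, hact⟩
    exact hcov.trans (iSup₂_le fun p hp => le_sSup ⟨p.2, hPH p hp, hact p hp⟩)
  · intro h
    refine ⟨{p | p.2 ∈ H ∧ p.2 • p.1 ≤ b}, ⟨(b, ⊤), hH, (QModule.top_smul' b).le⟩,
      fun p hp => hp.1, h.trans (sSup_le ?_), fun p hp => hp.2⟩
    rintro w ⟨u, hu, huw⟩
    exact le_iSup₂_of_le (w, u) ⟨hu, huw⟩ le_rfl

theorem stepLE_self {H : Set Q} (hH : ⊤ ∈ H) (a : M) : stepLE H a a :=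
  (stepLE_iff_le_sSup_smulBelow hH).2 (le_sSup (self_mem_smulBelow hH a))

def uniformSmulBelow {ι : Type*} (F : Set Q) (G : ι → Set Q) (b : ι → M) (J : Finset ι) :
    Set M :=
  {w | ∃ s ∈ F, ∀ j ∈ J, s • w ∈ smulBelow (G j) (b j)}

variable {ι : Type*} {F : Set Q} {G : ι → Set Q} {b : ι → M}

theorem mem_uniformSmulBelow_insert [DecidableEq ι] (hF : IsMFilter F) {J : Finset ι} {j : ι}
    {w d : M} (hw : w ∈ uniformSmulBelow F G b J) (hdw : d ≤ w)
    (hd : d ∈ smulBelow (filterSum F (G j)) (b j)) :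
    d ∈ uniformSmulBelow F G b (insert j J) := by
  obtain ⟨s, hs, hsw⟩ := hw
  obtain ⟨u, ⟨s', hs', t, ht, hst⟩, hud⟩ := hd
  refine ⟨s * s', hF.2.2 _ hs _ hs', (Finset.forall_mem_insert _ _ _).2 ⟨⟨t, ht, ?_⟩, fun k hk => ?_⟩⟩
  · rw [← QModule.mul_smul']
    refine le_trans (QModule.smul_le_smul_of_le_left ?_ d) hud
    calc t * (s * s') = s' * t * s := by ac_rfl
      _ ≤ u := (IntegralQuantale.mul_le_left _ s).trans hst
  · refine isLowerSet_smulBelow _ _ ?_ (hsw k hk)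
    calc (s * s') • d ≤ s • d :=
          QModule.smul_le_smul_of_le_left (IntegralQuantale.mul_le_left s s') d
      _ ≤ s • w := QModule.smul_le_smul_of_le_right s hdw

theorem le_sSup_uniformSmulBelow (hM : Shrinkable M) (hF : IsMFilter F)
    (hG : ∀ j, IsMFilter (G j)) {a : M} (J : Finset ι)
    (h : ∀ j ∈ J, stepLE (filterSum F (G j)) a (b j)) :
    a ≤ sSup (uniformSmulBelow F G b J ∩ Set.Iic a) := by
  classical
  induction J using Finset.induction_on with
  | empty => exact le_sSup ⟨⟨⊤, hF.1, by simp⟩, le_rfl⟩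
  | @insert j J _ ih =>
    obtain ⟨hj, hJ⟩ := (Finset.forall_mem_insert _ _ _).1 h
    have hFG := isMFilter_filterSum hF (hG j)
    refine (ih hJ).trans (sSup_le fun w ⟨hw, hwa⟩ => ?_)
    have hw_cover := Shrinkable.le_sSup_inter_Iic hM ⟨b j, self_mem_smulBelow hFG.1 (b j)⟩
      (isLowerSet_smulBelow _ _) (supClosed_smulBelow hFG _)
      (hwa.trans ((stepLE_iff_le_sSup_smulBelow hFG.1).1 hj))
    refine hw_cover.trans (sSup_le_sSup fun d ⟨hd, hdw⟩ => ?_)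
    exact ⟨mem_uniformSmulBelow_insert hF hw hdw hd, le_trans hdw hwa⟩

end SmulBelow

/-- Gluing: if the `xᵢ` agree pairwise one-step over `Fᵢ + Fⱼ`, then they can be glued
to a single element `x` with `x ≼¹_{Fᵢ} xᵢ ≼¹_{Fᵢ} x` for all `i`. -/
theorem glue_finitely_many_filters {Q : Type u} {M : Type v}
    [IntegralQuantale Q] [QModule Q M] (hM : Shrinkable M)
    (n : ℕ) (F : Fin n → Set Q) (hF : ∀ i, IsMFilter (F i)) (x : Fin n → M)
    (hx : ∀ i j, i ≠ j → stepLE (filterSum (F i) (F j)) (x i) (x j)) :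
    ∃ y : M, ∀ i, stepLE (F i) y (x i) ∧ stepLE (F i) (x i) y := by
  set G := ⋂ j, smulBelow (F j) (x j)
  refine ⟨sSup G, fun i => ⟨?_, ?_⟩⟩
  · exact (stepLE_iff_le_sSup_smulBelow (hF i).1).2 (sSup_le_sSup (Set.iInter_subset _ i))
  · have hxi : ∀ j, stepLE (filterSum (F i) (F j)) (x i) (x j) := fun j => by
      obtain rfl | hij := eq_or_ne i j
      · exact stepLE_self (isMFilter_filterSum (hF i) (hF i)).1 _
      · exact hx i j hij
    refine (stepLE_iff_le_sSup_smulBelow (hF i).1).2 <|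
      (le_sSup_uniformSmulBelow hM (hF i) hF Finset.univ fun j _ => hxi j).trans ?_
    refine sSup_le_sSup fun w ⟨⟨s, hs, hsw⟩, _⟩ => ⟨s, hs, le_sSup ?_⟩
    exact Set.mem_iInter.2 fun j => hsw j (Finset.mem_univ j)
end

section
/- Let Q be a quantale and (F_k)_{k ∈ ℕ} a countable family of multiplicative filters of Q such that F = ⋂_{k ∈ ℕ} F_k is locally solid. Let M be a shrinkable Q-module and a, b ∈ M. If a ≼¹_{F_k} b for every k ∈ ℕ, then a ≼¹_F b. -/
universe u v

/-- An m-filter `F` is locally solid if there is `W ⊆ Q` with `⨆ W = ⊤` such that for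
every `w ∈ W` and every nonempty `S` with `⨆ S ∈ F`, some `t ∈ F` satisfies
`t * w ≤ ⨆ S₀` for a finite nonempty `S₀ ⊆ S`. -/
def LocallySolid {Q : Type u} [IntegralQuantale Q] (F : Set Q) : Prop :=
  ∃ W : Set Q, sSup W = ⊤ ∧ ∀ w ∈ W, ∀ S : Set Q, S.Nonempty → sSup S ∈ F →
    ∃ t ∈ F, ∃ S₀ : Finset Q, S₀.Nonempty ∧ ↑S₀ ⊆ S ∧ t * w ≤ S₀.sup id

section helpers
variable {Q : Type u} {M : Type v} [IntegralQuantale Q] [QModule Q M]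

lemma iq_mul_le_right {p q r : Q} (hqr : q ≤ r) : p * q ≤ p * r := by
  have hr : r = sSup {q, r} := by rw [sSup_pair, sup_eq_right.mpr hqr]
  have := IntegralQuantale.mul_sSup p ({q, r} : Set Q)
  rw [← hr] at this
  rw [this]
  exact le_iSup₂ (f := fun b (_ : b ∈ ({q, r} : Set Q)) => p * b) q (Set.mem_insert q {r})

lemma iq_mul_le_left (p q : Q) : p * q ≤ p := by
  calc p * q ≤ p * 1 := iq_mul_le_right (by rw [IntegralQuantale.one_eq_top]; exact le_top)
  _ = p := mul_one p

lemma qm_smul_mono_right (q : Q) {x y : M} (hxy : x ≤ y) : q • x ≤ q • y := by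
  have hy : y = sSup {x, y} := by rw [sSup_pair, sup_eq_right.mpr hxy]
  rw [hy, QModule.smul_sSup' q ({x, y} : Set M) ⟨x, Set.mem_insert x {y}⟩]
  exact le_iSup₂ (f := fun m (_ : m ∈ ({x, y} : Set M)) => q • m) x (Set.mem_insert x {y})

lemma qm_smul_mono_left {p q : Q} (hpq : p ≤ q) (x : M) : p • x ≤ q • x := by
  have hq : (⨆ r ∈ ({p, q} : Set Q), r) = q := by
    rw [← sSup_eq_iSup, sSup_pair, sup_eq_right.mpr hpq]
  have := QModule.sSup_smul' ({p, q} : Set Q) x ⟨p, Set.mem_insert p {q}⟩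
  rw [hq] at this
  rw [this]
  exact le_iSup₂ (f := fun r (_ : r ∈ ({p, q} : Set Q)) => r • x) p (Set.mem_insert p {q})

end helpers

/-- Countable merging of one-step relations: if `⋂ₖ Fₖ` is locally solid and `M` is
shrinkable, then `a ≼¹_{Fₖ} b` for all `k` implies `a ≼¹_{⋂ₖ Fₖ} b`. -/
theorem countable_filter_merge {Q : Type u} {M : Type v}
    [IntegralQuantale Q] [QModule Q M]
    (F : ℕ → Set Q) (hF : ∀ k, IsMFilter (F k))
    (hsolid : LocallySolid (⋂ k, F k)) (hM : Shrinkable M)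
    (a b : M) (h : ∀ k, stepLE (F k) a b) :
    stepLE (⋂ k, F k) a b := by
  classical
  -- trivial quantale case
  by_cases htriv : (⊥ : Q) = ⊤
  · obtain ⟨P, h1, _, h3, h4⟩ := h 0
    refine ⟨P, h1, fun p _ => Set.mem_iInter.2 fun k => ?_, h3, h4⟩
    have : p.2 = ⊤ := le_antisymm le_top (htriv ▸ bot_le)
    rw [this]; exact (hF k).1
  -- a = ⊥ case
  by_cases hbot : a = ⊥
  · refine ⟨{(b, ⊤)}, ⟨(b, ⊤), rfl⟩, ?_, ?_, ?_⟩
    · rintro p hp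
      rw [Set.mem_singleton_iff] at hp
      subst hp
      exact Set.mem_iInter.2 fun k => (hF k).1
    · rw [hbot]; exact bot_le
    · rintro p hp
      rw [Set.mem_singleton_iff] at hp
      subst hp
      rw [QModule.top_smul']
  -- main case
  obtain ⟨W, hWtop, hWsolid⟩ := hsolid
  have hWne : W.Nonempty := by
    rcases W.eq_empty_or_nonempty with hE | hN
    · exact absurd (by rw [← sSup_empty, ← hE, hWtop]) htriv
    · exact hN
  -- refinement lemma
  have refineLem : ∀ (n : ℕ) (x : M), x ≤ a → ∃ Z : Set M, Z.Nonempty ∧ x = sSup Z ∧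
      ∀ z ∈ Z, z ≤ x ∧ ∃ s, s ∈ F n ∧ s • z ≤ b := by
    intro n x hx
    obtain ⟨P, hPne, hPF, haP, hPb⟩ := h n
    have haP' : a ≤ sSup (Prod.fst '' P) := by rw [sSup_image]; exact haP
    have hXne : (Prod.fst '' P).Nonempty := hPne.image _
    obtain ⟨Y, hYne, hYx, hYfin⟩ := hM x (Prod.fst '' P) hXne (hx.trans haP')
    have hcoeff : ∀ z : M, z ∈ Prod.fst '' P → ∃ q, q ∈ F n ∧ q • z ≤ b := by
      rintro z ⟨p, hp, rfl⟩
      exact ⟨p.2, hPF p hp, hPb p hp⟩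
    choose! σ hσ1 hσ2 using hcoeff
    refine ⟨Y, hYne, hYx, fun y hy => ⟨hYx ▸ le_sSup hy, ?_⟩⟩
    obtain ⟨T, hTne, hTsub, hyT⟩ := hYfin y hy
    refine ⟨∏ z ∈ T, σ z, ?_, ?_⟩
    · refine Finset.prod_induction σ (· ∈ F n) (fun u v hu hv => (hF n).2.2 u hu v hv) ?_
        (fun z hz => hσ1 z (hTsub hz))
      rw [IntegralQuantale.one_eq_top]; exact (hF n).1
    · have hprod_le : ∀ z ∈ T, (∏ u ∈ T, σ u) ≤ σ z := by
        intro z hz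
        calc (∏ u ∈ T, σ u) = σ z * ∏ u ∈ T.erase z, σ u := (Finset.mul_prod_erase T σ hz).symm
        _ ≤ σ z * 1 := iq_mul_le_right (by rw [IntegralQuantale.one_eq_top]; exact le_top)
        _ = σ z := mul_one _
      calc (∏ u ∈ T, σ u) • y ≤ (∏ u ∈ T, σ u) • (T.sup id) := qm_smul_mono_right _ hyT
      _ ≤ b := by
        rw [Finset.sup_id_eq_sSup, QModule.smul_sSup' _ _ (by exact_mod_cast hTne)]
        refine iSup₂_le fun z hz => ?_
        have hz' : z ∈ T := by exact_mod_cast hz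
        calc (∏ u ∈ T, σ u) • z ≤ σ z • z := qm_smul_mono_left (hprod_le z hz') z
        _ ≤ b := hσ2 z (hTsub hz')
  -- the admissible sets
  set A : Q → Set M := fun w => {x | ∃ t, t ∈ (⋂ k, F k) ∧ (t * w) • x ≤ b} with hA
  -- key claim
  have claim : ∀ w ∈ W, a ≤ sSup (A w) := by
    intro w hw
    by_contra hau
    set u := sSup (A w) with hu
    have key : ∀ (n : ℕ) (x : M), x ≤ a → ¬x ≤ u →
        ∃ z, (z ≤ a ∧ ¬z ≤ u) ∧ z ≤ x ∧ ∃ s, s ∈ F n ∧ s • z ≤ b := by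
      intro n x hxa hxu
      obtain ⟨Z, hZne, hZx, hZprop⟩ := refineLem n x hxa
      have : ∃ z ∈ Z, ¬z ≤ u := by
        by_contra hc
        push_neg at hc
        exact hxu (hZx ▸ sSup_le hc)
      obtain ⟨z, hzZ, hzu⟩ := this
      obtain ⟨hzx, s, hs1, hs2⟩ := hZprop z hzZ
      exact ⟨z, ⟨hzx.trans hxa, hzu⟩, hzx, s, hs1, hs2⟩
    choose! g hg1 hg2 using key
    set seq : ℕ → M := fun n => Nat.rec a (fun k x => g k x) n with hseq
    have hseq0 : seq 0 = a := rfl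
    have hseqS : ∀ n, seq (n + 1) = g n (seq n) := fun n => rfl
    have inv : ∀ n, seq n ≤ a ∧ ¬seq n ≤ u := by
      intro n
      induction n with
      | zero => exact ⟨le_rfl, hau⟩
      | succ n ih =>
        rw [hseqS]
        exact hg1 n (seq n) ih.1 ih.2
    have chain : ∀ n, seq (n + 1) ≤ seq n := by
      intro n
      rw [hseqS]
      exact (hg2 n (seq n) (inv n).1 (inv n).2).1
    have anti : Antitone seq := antitone_nat_of_succ_le chain
    have coeff : ∀ n, ∃ s, s ∈ F n ∧ s • seq (n + 1) ≤ b := by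
      intro n
      rw [hseqS]
      exact (hg2 n (seq n) (inv n).1 (inv n).2).2
    choose sf hsf1 hsf2 using coeff
    have hS2 : sSup (Set.range sf) ∈ ⋂ k, F k :=
      Set.mem_iInter.2 fun k => (hF k).2.1 (sf k) (hsf1 k) _ (le_sSup ⟨k, rfl⟩)
    obtain ⟨t, htF, S₀, hS₀ne, hS₀sub, hle⟩ :=
      hWsolid w hw (Set.range sf) (Set.range_nonempty sf) hS2
    have hidx : ∀ q ∈ S₀, ∃ k, sf k = q := fun q hq => hS₀sub hq
    choose! idx hidxs using hidx
    set N := S₀.sup idx with hN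
    have keyb : (S₀.sup id) • seq (N + 1) ≤ b := by
      rw [Finset.sup_id_eq_sSup, sSup_eq_iSup,
        QModule.sSup_smul' _ _ (by exact_mod_cast hS₀ne)]
      refine iSup₂_le fun q hq => ?_
      have hq' : q ∈ S₀ := by exact_mod_cast hq
      calc q • seq (N + 1) ≤ q • seq (idx q + 1) :=
            qm_smul_mono_right q (anti (Nat.succ_le_succ (Finset.le_sup hq')))
      _ = sf (idx q) • seq (idx q + 1) := by rw [hidxs q hq']
      _ ≤ b := hsf2 (idx q)
    have : seq (N + 1) ∈ A w := ⟨t, htF, le_trans (qm_smul_mono_left hle _) keyb⟩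
    exact (inv (N + 1)).2 (le_sSup this)
  -- nonemptiness of the admissible sets
  have hAne : ∀ w ∈ W, (A w).Nonempty := by
    intro w hw
    rcases (A w).eq_empty_or_nonempty with hE | hN
    · exfalso
      apply hbot
      have := claim w hw
      rw [hE, sSup_empty] at this
      exact le_antisymm this bot_le
    · exact hN
  -- the final family
  refine ⟨{p : M × Q | ∃ w ∈ W, ∃ x, p.1 = w • x ∧ p.2 ∈ (⋂ k, F k) ∧ (p.2 * w) • x ≤ b},
    ?_, ?_, ?_, ?_⟩
  · obtain ⟨w₀, hw₀⟩ := hWne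
    obtain ⟨x₀, t₀, ht₀, ht₀'⟩ := hAne w₀ hw₀
    exact ⟨(w₀ • x₀, t₀), w₀, hw₀, x₀, rfl, ht₀, ht₀'⟩
  · rintro p ⟨w, hw, x, _, h2, _⟩
    exact h2
  · have ha1 : a = ⨆ q ∈ W, q • a := by
      rw [← QModule.sSup_smul' W a hWne, ← sSup_eq_iSup, hWtop, QModule.top_smul']
    rw [ha1]
    refine iSup₂_le fun w hw => ?_
    have h2 : w • a ≤ w • sSup (A w) := qm_smul_mono_right w (claim w hw)
    rw [QModule.smul_sSup' w (A w) (hAne w hw)] at h2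
    refine h2.trans (iSup₂_le fun x hx => ?_)
    obtain ⟨t, ht, ht'⟩ := hx
    have hmem : ((w • x, t) : M × Q) ∈
        {p : M × Q | ∃ w ∈ W, ∃ x, p.1 = w • x ∧ p.2 ∈ (⋂ k, F k) ∧ (p.2 * w) • x ≤ b} :=
      ⟨w, hw, x, rfl, ht, ht'⟩
    exact le_biSup Prod.fst hmem
  · rintro p ⟨w, _, x, h1, _, h3⟩
    rw [h1, ← QModule.mul_smul']
    exact h3
end

section
/- Let Q be a quantale, F a solid multiplicative filter of Q, and q ∈ Q with q ∉ F. Then there exists a prime element p ∈ Q with q ≤ p and p ∉ F. -/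
/-!
A maximal element `p` of the complement of an m-filter `F` is prime: if `a * b ≤ p` with
`a, b ≰ p`, maximality puts `p ⊔ a` and `p ⊔ b` in `F`, hence their product, which lies below
`p ⊔ a * b = p`. Such a `p` above `q` exists by Zorn's lemma, because solidity makes the
complement of `F` closed under suprema of nonempty chains: a finite nonempty subset of a chain
has its supremum in the chain.
-/

universe u v

/-- An m-filter is solid if whenever the supremum of a nonempty set belongs to it,
so does the supremum of some finite nonempty subset. -/
def IsSolid {Q : Type u} [IntegralQuantale Q] (F : Set Q) : Prop :=
  ∀ S : Set Q, S.Nonempty → sSup S ∈ F →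
    ∃ S₀ : Finset Q, S₀.Nonempty ∧ ↑S₀ ⊆ S ∧ S₀.sup id ∈ F

namespace IntegralQuantale

variable {Q : Type u} [IntegralQuantale Q]

theorem mul_sup (a b c : Q) : a * (b ⊔ c) = a * b ⊔ a * c := by
  simpa [iSup_or, iSup_sup_eq] using mul_sSup a {b, c}

instance : MulLeftMono Q :=
  ⟨fun a b c h => by
    rw [← sup_eq_right.mpr h, mul_sup]
    exact le_sup_left⟩

theorem mul_le_left_s15 (a b : Q) : a * b ≤ a :=
  calc a * b ≤ a * ⊤ := mul_le_mul_right le_top a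
    _ = a := by rw [← one_eq_top, mul_one]

theorem mul_le_right_s15 (a b : Q) : a * b ≤ b :=
  mul_comm a b ▸ mul_le_left_s15 b a

theorem sup_mul_sup_le (p a b : Q) : (p ⊔ a) * (p ⊔ b) ≤ p ⊔ a * b := by
  rw [mul_sup, mul_comm (p ⊔ a) p, mul_comm (p ⊔ a) b, mul_sup, mul_sup]
  refine sup_le (sup_le (le_sup_of_le_left (mul_le_left_s15 p p)) (le_sup_of_le_left (mul_le_left_s15 p a)))
    (sup_le (le_sup_of_le_left (mul_le_right_s15 b p)) (le_sup_of_le_right (mul_comm b a).le))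

def IsPrime (p : Q) : Prop :=
  p ≠ ⊤ ∧ ∀ a b : Q, a * b ≤ p → a ≤ p ∨ b ≤ p

end IntegralQuantale

open IntegralQuantale

theorem IsChain.finset_sup_mem {α : Type*} [SemilatticeSup α] [OrderBot α] {c : Set α}
    (hc : IsChain (· ≤ ·) c) {s : Finset α} (hs : s.Nonempty) (hsc : ↑s ⊆ c) : s.sup id ∈ c := by
  rw [← Finset.sup'_eq_sup hs]
  refine Finset.sup'_mem c (fun x hx y hy => ?_) s hs id hsc
  rcases hc.total hx hy with hxy | hyx
  · rwa [sup_eq_right.mpr hxy]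
  · rwa [sup_eq_left.mpr hyx]

section Filters

variable {Q : Type u} [IntegralQuantale Q] {F : Set Q}

theorem IsMFilter.isPrime_of_maximal_notMem (hF : IsMFilter F) {p : Q}
    (hp : Maximal (· ∉ F) p) : IsPrime p := by
  obtain ⟨hTop, hUp, hMul⟩ := hF
  have sup_mem {a : Q} (ha : ¬a ≤ p) : p ⊔ a ∈ F :=
    not_not.mp fun h => ha (le_sup_right.trans (hp.2 h le_sup_left))
  refine ⟨fun h => hp.1 (h ▸ hTop), fun a b hab => ?_⟩
  by_contra! hnot
  have hprod : (p ⊔ a) * (p ⊔ b) ≤ p := (sup_mul_sup_le p a b).trans (sup_le le_rfl hab)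
  exact hp.1 (hUp _ (hMul _ (sup_mem hnot.1) _ (sup_mem hnot.2)) p hprod)

theorem IsSolid.exists_mem_of_isChain (hsolid : IsSolid F) {c : Set Q}
    (hc : IsChain (· ≤ ·) c) (hne : c.Nonempty) (hsup : sSup c ∈ F) : ∃ x ∈ c, x ∈ F := by
  obtain ⟨s, hs, hsc, hsF⟩ := hsolid c hne hsup
  exact ⟨_, hc.finset_sup_mem hs hsc, hsF⟩

theorem IsSolid.exists_le_maximal_notMem (hsolid : IsSolid F) {q : Q} (hq : q ∉ F) :
    ∃ p, q ≤ p ∧ Maximal (· ∉ F) p := by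
  refine zorn_le_nonempty₀ {x | x ∉ F} (fun c hcF hc y hy => ⟨sSup c, ?_, fun z => le_sSup⟩) q hq
  intro hsup
  obtain ⟨x, hxc, hxF⟩ := hsolid.exists_mem_of_isChain hc ⟨y, hy⟩ hsup
  exact hcF hxc hxF

end Filters

/-- Prime avoidance for solid filters: if `q ∉ F` with `F` solid, there is a prime
element `p ≥ q` with `p ∉ F`. -/
theorem exists_prime_above_avoiding_solid_filter {Q : Type u} [IntegralQuantale Q]
    (F : Set Q) (hF : IsMFilter F) (hsolid : IsSolid F) (q : Q) (hq : q ∉ F) :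
    ∃ p : Q, p ≠ ⊤ ∧ (∀ a b : Q, a * b ≤ p → a ≤ p ∨ b ≤ p) ∧ q ≤ p ∧ p ∉ F := by
  obtain ⟨p, hqp, hp⟩ := hsolid.exists_le_maximal_notMem hq
  obtain ⟨hne, hprime⟩ := hF.isPrime_of_maximal_notMem hp
  exact ⟨p, hne, hprime, hqp, hp.1⟩
end
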